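/- On a 4 × n board (n ≥ 4), the minimum number of clues that define a Numbrix puzzle is exactly 2: there exist two clues consistent with exactly one solution, and for every single consistent clue there are at least two solutions consistent with it. -/

import Mathlib

/-- Two cells of an `m × n` board are adjacent if they agree in one coordinate
and differ by exactly 1 in the other. -/
def Adj {m n : ℕ} (a b : Fin m × Fin n) : Prop :=
  (a.1 = b.1 ∧ (a.2.val + 1 = b.2.val ∨ b.2.val + 1 = a.2.val)) ∨
  (a.2 = b.2 ∧ (a.1.val + 1 = b.1.val ∨ b.1.val + 1 = a.1.val))

/-- A Numbrix solution on an `m × n` board: a bijection onto `{1, …, m*n}`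
(equivalently, an injective map with values in `[1, m*n]`) such that cells
carrying consecutive values are adjacent. -/
def IsNumbrix {m n : ℕ} (f : Fin m × Fin n → ℕ) : Prop :=
  (∀ c, 1 ≤ f c ∧ f c ≤ m * n) ∧ Function.Injective f ∧
    ∀ c c', f c' = f c + 1 → Adj c c'


/-!
A solution is a Hamiltonian path of the grid graph, so its values are `1`-Lipschitz for the
taxicab distance. A single clue never suffices: the board has a Hamiltonian cycle (the
`zigzag` solution closes up, `4n` sitting next to `1`), and running around the cycle from the
clue in either direction gives two different solutions through it.

Two clues suffice: the clues `n` at `(0, 0)` and `3n - 1` at `(3, 0)` are far enough apart that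
the taxicab bounds pin down the last column, after which every row of the solution is a
shortest path between two cells of that row whose values are already known, hence runs straight
along the row.
-/

theorem Adj.symm {m n : ℕ} {a b : Fin m × Fin n} (h : Adj a b) : Adj b a := by
  unfold Adj at *
  omega

def taxicab {m n : ℕ} (a b : Fin m × Fin n) : ℕ :=
  Nat.dist a.1 b.1 + Nat.dist a.2 b.2

theorem taxicab_comm {m n : ℕ} (a b : Fin m × Fin n) : taxicab a b = taxicab b a := by
  simp only [taxicab, Nat.dist_comm]

theorem taxicab_triangle {m n : ℕ} (a b c : Fin m × Fin n) :
    taxicab a c ≤ taxicab a b + taxicab b c :=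
  (add_le_add (Nat.dist.triangle_inequality _ _ _) (Nat.dist.triangle_inequality _ _ _)).trans_eq
    (add_add_add_comm _ _ _ _)

theorem Adj.taxicab_eq_one {m n : ℕ} {a b : Fin m × Fin n} (h : Adj a b) : taxicab a b = 1 := by
  simp only [Adj, Fin.ext_iff] at h
  simp only [taxicab, Nat.dist]
  omega

namespace IsNumbrix

variable {m n : ℕ} {f : Fin m × Fin n → ℕ}

theorem exists_apply_eq (hf : IsNumbrix f) {v : ℕ} (hv₁ : 1 ≤ v) (hv₂ : v ≤ m * n) :
    ∃ c, f c = v := by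
  obtain ⟨c, -, hc⟩ := Finset.surjOn_of_injOn_of_card_le (s := Finset.univ)
    (t := Finset.Icc 1 (m * n)) f (fun c _ => Finset.mem_Icc.2 (hf.1 c)) hf.2.1.injOn
    (by simp) (Finset.mem_Icc.2 ⟨hv₁, hv₂⟩)
  exact ⟨c, hc⟩

theorem exists_adj_succ (hf : IsNumbrix f) {a : Fin m × Fin n} (ha : f a < m * n) :
    ∃ b, Adj a b ∧ f b = f a + 1 := by
  obtain ⟨b, hb⟩ := hf.exists_apply_eq (v := f a + 1) (by omega) ha
  exact ⟨b, hf.2.2 a b hb, hb⟩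

theorem exists_adj_pred (hf : IsNumbrix f) {b : Fin m × Fin n} (hb : 1 < f b) :
    ∃ a, Adj a b ∧ f b = f a + 1 := by
  obtain ⟨a, ha⟩ := hf.exists_apply_eq (v := f b - 1) (by omega) (by have := hf.1 b; omega)
  exact ⟨a, hf.2.2 a b (by omega), by omega⟩

theorem taxicab_le_of_apply_eq_add (hf : IsNumbrix f) :
    ∀ (k : ℕ) (a b : Fin m × Fin n), f b = f a + k → taxicab a b ≤ k
  | 0, a, b, h => by
    obtain rfl : a = b := hf.2.1 (by omega)
    simp [taxicab]
  | k + 1, a, b, h => by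
    obtain ⟨c, hcb, hc⟩ := hf.exists_adj_pred (b := b) (by have := hf.1 a; omega)
    have hac := hf.taxicab_le_of_apply_eq_add k a c (by omega)
    have := taxicab_triangle a c b
    rw [hcb.taxicab_eq_one] at this
    omega

theorem taxicab_le (hf : IsNumbrix f) (a b : Fin m × Fin n) :
    taxicab a b ≤ Nat.dist (f a) (f b) := by
  rcases le_total (f a) (f b) with h | h
  · rw [Nat.dist_eq_sub_of_le h]
    exact hf.taxicab_le_of_apply_eq_add _ a b (by omega)
  · rw [Nat.dist_eq_sub_of_le_right h, taxicab_comm]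
    exact hf.taxicab_le_of_apply_eq_add _ b a (by omega)

/-- Each intermediate value lies on a shortest path between the two cells, and the only shortest
path between two cells of a row is the row itself. -/
theorem apply_eq_of_row (hf : IsNumbrix f) {i : Fin m} {j₁ j₂ j : Fin n}
    (h : f (i, j₂) = f (i, j₁) + Nat.dist j₁ j₂)
    (hj : Nat.dist j₁ j + Nat.dist j j₂ = Nat.dist j₁ j₂) :
    f (i, j) = f (i, j₁) + Nat.dist j₁ j := by
  obtain ⟨c, hc⟩ := hf.exists_apply_eq (v := f (i, j₁) + Nat.dist j₁ j)
    (by have := hf.1 (i, j₁); omega) (by have := hf.1 (i, j₂); omega)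
  have h₁ := hf.taxicab_le (i, j₁) c
  have h₂ := hf.taxicab_le c (i, j₂)
  rw [hc, Nat.dist_eq_sub_of_le (by omega), Nat.add_sub_cancel_left] at h₁
  rw [hc, h, Nat.dist_eq_sub_of_le (by omega), ← hj] at h₂
  simp only [taxicab] at h₁ h₂
  have := Nat.dist.triangle_inequality j₁ c.2 j₂
  have hci : Nat.dist i c.1 = 0 := by omega
  have hc₁ : Nat.dist j₁ c.2 ≤ Nat.dist j₁ j := by omega
  have hc₂ : Nat.dist c.2 j₂ ≤ Nat.dist j j₂ := by omega
  obtain rfl : c = (i, j) := by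
    refine Prod.ext (Fin.ext (Nat.eq_of_dist_eq_zero hci).symm) (Fin.ext ?_)
    show (c.2 : ℕ) = j
    simp only [Nat.dist] at hc₁ hc₂ hj
    omega
  exact hc

end IsNumbrix

/-- A Hamiltonian cycle of the board: `p c` is the position of the cell `c` along the cycle. -/
def IsCycleLabelling {m n : ℕ} (p : Fin m × Fin n → ZMod (m * n)) : Prop :=
  Function.Injective p ∧ ∀ c c', p c' = p c + 1 → Adj c c'

namespace IsCycleLabelling

variable {m n : ℕ} {p : Fin m × Fin n → ZMod (m * n)}

theorem add_const (hp : IsCycleLabelling p) (k : ZMod (m * n)) :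
    IsCycleLabelling (fun c => p c + k) :=
  ⟨(add_left_injective k).comp hp.1, fun c c' h => hp.2 c c' (by linear_combination h)⟩

theorem neg (hp : IsCycleLabelling p) : IsCycleLabelling (fun c => -p c) :=
  ⟨neg_injective.comp hp.1, fun c c' h => (hp.2 c' c (by linear_combination h)).symm⟩

theorem surjective [NeZero (m * n)] (hp : IsCycleLabelling p) : Function.Surjective p :=
  ((Nat.bijective_iff_injective_and_card p).2 ⟨hp.1, by simp⟩).2

theorem isNumbrix [NeZero (m * n)] (hp : IsCycleLabelling p) :
    IsNumbrix (fun c => (p c).val + 1) := by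
  refine ⟨fun c => ⟨Nat.le_add_left _ _, (p c).val_lt⟩, ?_, fun c c' h => hp.2 c c' ?_⟩
  · exact fun a b h => hp.1 (ZMod.val_injective _ (Nat.succ_injective h))
  · rw [← ZMod.natCast_zmod_val (p c'), Nat.succ_injective h]
    push_cast
    rw [ZMod.natCast_zmod_val]

/-- Reading the cycle forwards or backwards from a given cell with a given value gives two
solutions, which differ at the cell following it on the cycle as soon as `2 ≠ 0` in `ℤ/mn`. -/
theorem exists_ne_isNumbrix (hp : IsCycleLabelling p) (hmn : 3 ≤ m * n) (c : Fin m × Fin n)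
    {v : ℕ} (hv : 1 ≤ v ∧ v ≤ m * n) :
    ∃ g h : Fin m × Fin n → ℕ, IsNumbrix g ∧ IsNumbrix h ∧ g c = v ∧ h c = v ∧ g ≠ h := by
  have : NeZero (m * n) := ⟨by omega⟩
  set k : ZMod (m * n) := ((v - 1 : ℕ) : ZMod (m * n))
  have hk : k.val + 1 = v := by rw [ZMod.val_natCast_of_lt (by omega)]; omega
  obtain ⟨c', hc'⟩ := hp.surjective (p c + 1)
  refine ⟨_, _, ((hp.add_const (-p c)).add_const k).isNumbrix,
    ((hp.neg.add_const (p c)).add_const k).isNumbrix, by simpa using hk, by simpa using hk, ?_⟩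
  intro hgh
  have heq := ZMod.val_injective _ (Nat.succ_injective (congrFun hgh c'))
  simp only [hc'] at heq
  have : ((2 : ℕ) : ZMod (m * n)) = 0 := by push_cast; linear_combination heq
  have := Nat.le_of_dvd two_pos ((ZMod.natCast_eq_zero_iff _ _).1 this)
  omega

end IsCycleLabelling

theorem IsNumbrix.isCycleLabelling {m n : ℕ} {f : Fin m × Fin n → ℕ} (hf : IsNumbrix f)
    (hclosed : ∀ c c', f c = m * n → f c' = 1 → Adj c c') :
    IsCycleLabelling (fun c => ((f c - 1 : ℕ) : ZMod (m * n))) := by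
  have hlt (c) : f c - 1 < m * n := by have := hf.1 c; omega
  refine ⟨fun a b h => hf.2.1 ?_, fun c c' h => ?_⟩
  · rw [ZMod.natCast_eq_natCast_iff', Nat.mod_eq_of_lt (hlt a), Nat.mod_eq_of_lt (hlt b)] at h
    have := hf.1 a
    have := hf.1 b
    omega
  · rw [← Nat.cast_succ, ZMod.natCast_eq_natCast_iff', Nat.mod_eq_of_lt (hlt c'),
      Nat.succ_eq_add_one, Nat.sub_add_cancel (hf.1 c).1] at h
    have := hf.1 c'
    rcases (hf.1 c).2.lt_or_eq with hc | hc
    · rw [Nat.mod_eq_of_lt hc] at h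
      exact hf.2.2 c c' (by omega)
    · rw [hc, Nat.mod_self] at h
      exact hclosed c c' hc (by omega)

/-- Starting at the top right corner: along row `0` from right to left, down, along row `1` to
column `n - 2`, down, back along row `2`, down, along row `3`, and up the last column. -/
def zigzag (n : ℕ) : Fin 4 × Fin n → ℕ
  | (0, j) => n - j
  | (1, j) => if j.val + 1 = n then 4 * n else n + 1 + j
  | (2, j) => if j.val + 1 = n then 4 * n - 1 else 3 * n - 2 - j
  | (3, j) => 3 * n - 1 + j

namespace Zigzag

theorem isNumbrix {n : ℕ} (hn : 2 ≤ n) : IsNumbrix (zigzag n) := by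
  refine ⟨?_, ?_, ?_⟩
  · rintro ⟨i, j⟩
    have := j.isLt
    fin_cases i <;> simp only [zigzag] <;> (try split_ifs) <;> omega
  · rintro ⟨i, j⟩ ⟨i', j'⟩ h
    have := j.isLt
    have := j'.isLt
    fin_cases i <;> fin_cases i' <;>
      simp only [zigzag, Prod.ext_iff, Fin.ext_iff, true_and] at h ⊢ <;>
      (try split_ifs at h) <;> omega
  · rintro ⟨i, j⟩ ⟨i', j'⟩ h
    have := j.isLt
    have := j'.isLt
    fin_cases i <;> fin_cases i' <;>
      simp only [zigzag, Adj, Fin.ext_iff, true_and, true_or, or_true, and_true] at h ⊢ <;>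
      (try split_ifs at h) <;> omega

theorem adj_of_eq_of_eq_one {n : ℕ} (c c' : Fin 4 × Fin n) (h : zigzag n c = 4 * n)
    (h' : zigzag n c' = 1) : Adj c c' := by
  obtain ⟨i, j⟩ := c
  obtain ⟨i', j'⟩ := c'
  have := j.isLt
  have := j'.isLt
  fin_cases i <;> fin_cases i' <;>
    simp only [zigzag, Adj, Fin.ext_iff, true_and, true_or, or_true, and_true] at h h' ⊢ <;>
    (try split_ifs at h h') <;> omega

section Clues

variable {n : ℕ} [NeZero n] {f : Fin 4 × Fin n → ℕ}
  (hf : IsNumbrix f) (h₀ : f (0, 0) = n) (h₃ : f (3, 0) = 3 * n - 1)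
include hf h₀ h₃

theorem clue_bounds (i : Fin 4) (j : Fin n) :
    (i : ℕ) + j ≤ Nat.dist (f (i, j)) n ∧ 3 - (i : ℕ) + j ≤ Nat.dist (f (i, j)) (3 * n - 1) := by
  have h₁ := hf.taxicab_le (i, j) (0, 0)
  have h₂ := hf.taxicab_le (i, j) (3, 0)
  rw [h₀] at h₁
  rw [h₃] at h₂
  have := i.isLt
  simp only [taxicab, Nat.dist, Fin.isValue, Fin.coe_ofNat_eq_mod, Nat.reduceMod, Nat.zero_mod]
    at h₁ h₂ ⊢
  omega

theorem last_column (j : Fin n) (hj : j.val + 1 = n) :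
    f (0, j) = 1 ∧ f (1, j) = 4 * n ∧ f (2, j) = 4 * n - 1 ∧ f (3, j) = 4 * n - 2 := by
  have b₀ := clue_bounds hf h₀ h₃ 0 j
  have b₁ := clue_bounds hf h₀ h₃ 1 j
  have b₂ := clue_bounds hf h₀ h₃ 2 j
  have b₃ := clue_bounds hf h₀ h₃ 3 j
  simp only [Nat.dist, Fin.isValue, Fin.coe_ofNat_eq_mod, Nat.reduceMod] at b₀ b₁ b₂ b₃
  have range (i : Fin 4) := hf.1 (i, j)
  have e₀ : f (0, j) = 1 := by have := range 0; omega
  have e₁ : f (1, j) = 4 * n := by have := range 1; omega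
  have e₂ : f (2, j) = 4 * n - 1 := by
    have := range 2
    have := hf.2.1.ne (a₁ := (1, j)) (a₂ := (2, j)) (by simp)
    omega
  have e₃ : f (3, j) = 4 * n - 2 := by
    have := range 3
    have := hf.2.1.ne (a₁ := (1, j)) (a₂ := (3, j)) (by simp)
    have := hf.2.1.ne (a₁ := (2, j)) (a₂ := (3, j)) (by simp)
    omega
  exact ⟨e₀, e₁, e₂, e₃⟩

theorem outer_rows (j : Fin n) : f (0, j) = n - j ∧ f (3, j) = 3 * n - 1 + j := by
  have hn := NeZero.pos n
  obtain ⟨e₀, -, -, e₃⟩ := last_column hf h₀ h₃ ⟨n - 1, by omega⟩ (by simp only; omega)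
  have := j.isLt
  have row₀ := hf.apply_eq_of_row (i := 0) (j₁ := ⟨n - 1, by omega⟩) (j₂ := 0) (j := j)
    (by simp only [Nat.dist, Fin.val_zero]; omega) (by simp only [Nat.dist, Fin.val_zero]; omega)
  have row₃ := hf.apply_eq_of_row (i := 3) (j₁ := 0) (j₂ := ⟨n - 1, by omega⟩) (j := j)
    (by simp only [Nat.dist, Fin.val_zero]; omega) (by simp only [Nat.dist, Fin.val_zero]; omega)
  simp only [Nat.dist, Fin.val_zero] at row₀ row₃
  omega

theorem first_column : f (1, 0) = n + 1 ∧ f (2, 0) = 3 * n - 2 := by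
  have hn := NeZero.pos n
  constructor
  · obtain ⟨⟨i, j⟩, hadj, hb⟩ := hf.exists_adj_succ (a := (0, 0)) (by omega)
    simp only [Adj, Fin.ext_iff, Fin.val_zero] at hadj
    by_cases hi : i = 0
    · subst hi
      have := (outer_rows hf h₀ h₃ j).1
      omega
    · obtain ⟨rfl, rfl⟩ : i = 1 ∧ j = 0 := by
        simp only [Fin.ext_iff, Fin.isValue, Fin.coe_ofNat_eq_mod, Nat.reduceMod, Nat.zero_mod]
          at hi ⊢
        omega
      omega
  · obtain ⟨⟨i, j⟩, hadj, ha⟩ := hf.exists_adj_pred (b := (3, 0)) (by omega)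
    simp only [Adj, Fin.ext_iff, Fin.val_zero] at hadj
    by_cases hi : i = 3
    · subst hi
      have := (outer_rows hf h₀ h₃ j).2
      omega
    · obtain ⟨rfl, rfl⟩ : i = 2 ∧ j = 0 := by
        simp only [Fin.ext_iff, Fin.isValue, Fin.coe_ofNat_eq_mod, Nat.reduceMod, Nat.zero_mod]
          at hi hadj ⊢
        omega
      omega

theorem penultimate_column (j : Fin n) (hj : j.val + 2 = n) :
    f (1, j) = 2 * n - 1 ∧ f (2, j) = 2 * n := by
  obtain ⟨last, hlast⟩ : ∃ last : Fin n, last.val + 1 = n :=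
    ⟨⟨n - 1, by omega⟩, by simp only; omega⟩
  obtain ⟨e₀, e₁, e₂, e₃⟩ := last_column hf h₀ h₃ last hlast
  have hne (i i' : Fin 4) : f (i, j) ≠ f (i', last) :=
    hf.2.1.ne (by simp only [ne_eq, Prod.ext_iff, Fin.ext_iff]; omega)
  -- the clue bounds leave only the claimed value and values already used in the last column
  constructor
  · have b := clue_bounds hf h₀ h₃ 1 j
    simp only [Nat.dist, Fin.isValue, Fin.coe_ofNat_eq_mod, Nat.reduceMod] at b
    have := hf.1 (1, j)
    have := hne 1 0
    have := hne 1 1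
    have := hne 1 2
    omega
  · have b := clue_bounds hf h₀ h₃ 2 j
    simp only [Nat.dist, Fin.isValue, Fin.coe_ofNat_eq_mod, Nat.reduceMod] at b
    have := hf.1 (2, j)
    have := hne 2 1
    have := hne 2 2
    have := hne 2 3
    omega

theorem inner_rows (j : Fin n) (hj : j.val + 1 < n) :
    f (1, j) = n + 1 + j ∧ f (2, j) = 3 * n - 2 - j := by
  obtain ⟨k, hk⟩ : ∃ k : Fin n, k.val + 2 = n := ⟨⟨n - 2, by omega⟩, by simp only; omega⟩
  obtain ⟨k₁, k₂⟩ := penultimate_column hf h₀ h₃ k hk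
  obtain ⟨c₁, c₂⟩ := first_column hf h₀ h₃
  have row₁ := hf.apply_eq_of_row (i := 1) (j₁ := 0) (j₂ := k) (j := j)
    (by simp only [Nat.dist, Fin.val_zero]; omega) (by simp only [Nat.dist, Fin.val_zero]; omega)
  have row₂ := hf.apply_eq_of_row (i := 2) (j₁ := k) (j₂ := 0) (j := j)
    (by simp only [Nat.dist, Fin.val_zero]; omega) (by simp only [Nat.dist, Fin.val_zero]; omega)
  simp only [Nat.dist, Fin.val_zero] at row₁ row₂
  omega

theorem eq_of_clues : f = zigzag n := by
  funext ⟨i, j⟩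
  have := j.isLt
  fin_cases i <;> simp only [zigzag]
  · exact (outer_rows hf h₀ h₃ j).1
  · split_ifs with h
    · exact (last_column hf h₀ h₃ j h).2.1
    · exact (inner_rows hf h₀ h₃ j (by omega)).1
  · split_ifs with h
    · exact (last_column hf h₀ h₃ j h).2.2.1
    · exact (inner_rows hf h₀ h₃ j (by omega)).2
  · exact (outer_rows hf h₀ h₃ j).2

end Clues

end Zigzag

theorem four_by_n_min_clues (n : ℕ) (hn : 4 ≤ n) :
    (∃ S : Finset ((Fin 4 × Fin n) × ℕ),
      S.card = 2 ∧
      ∃! f : Fin 4 × Fin n → ℕ, IsNumbrix f ∧ ∀ p ∈ S, f p.1 = p.2) ∧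
    (∀ (c : Fin 4 × Fin n) (v : ℕ),
      (∃ f : Fin 4 × Fin n → ℕ, IsNumbrix f ∧ f c = v) →
      ∃ g h : Fin 4 × Fin n → ℕ,
        IsNumbrix g ∧ IsNumbrix h ∧ g c = v ∧ h c = v ∧ g ≠ h) := by
  have : NeZero n := ⟨by omega⟩
  have hz := Zigzag.isNumbrix (n := n) (by omega)
  refine ⟨⟨{((0, 0), n), ((3, 0), 3 * n - 1)}, Finset.card_pair (by simp), zigzag n,
    ⟨hz, ?_⟩, ?_⟩, ?_⟩
  · simp [zigzag]
  · rintro f ⟨hf, hS⟩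
    exact Zigzag.eq_of_clues hf (hS ((0, 0), n) (by simp)) (hS ((3, 0), 3 * n - 1) (by simp))
  · rintro c v ⟨f, hf, rfl⟩
    exact (hz.isCycleLabelling Zigzag.adj_of_eq_of_eq_one).exists_ne_isNumbrix (by omega) c
      (hf.1 c)
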